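/- Let n ≥ 2 and let ε be a rational number with 0 < ε < (2n−1)/(n(n+1)). Define θ⁺₁ = 1/n + ε and θ⁺ᵢ = 1/n − ε/(2n−1) for i = 2,…,2n. Then: (i) for every non-empty proper subset I ⊆ {1,…,2n}, ∑_{i∈I} θ⁺ᵢ ≠ 1; (ii) for every subset I ⊆ {1,…,2n}, ∑_{i∈I} θ⁺ᵢ > 1 if and only if |I| > n, or |I| = n and 1 ∈ I. -/

import Mathlib

/-!
Put ε = (2n - 1) η, so that every θᵢ with i ≥ 2 equals a = 1/n - η and θ₁ = a + δ with
δ = 2nη. Then ∑_{i ∈ I} θᵢ = |I| a + [1 ∈ I] δ, while 1 = n a + δ/2, and the bound on ε says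
exactly that δ < 2a. Hence the sum is compared with 1 by |I| against n, and for |I| = n by
whether 1 ∈ I; equality never occurs.
-/

open Finset

theorem Finset.sum_ite_eq_card_nsmul_add {ι M : Type*} [DecidableEq ι] [AddCommMonoid M]
    (I : Finset ι) (i₀ : ι) (a δ : M) :
    ∑ i ∈ I, (if i = i₀ then a + δ else a) = #I • a + if i₀ ∈ I then δ else 0 := by
  simp_rw [← sum_const, ← sum_ite_eq' I i₀ (fun _ ↦ δ), ← sum_add_distrib]
  exact sum_congr rfl fun i _ ↦ by split_ifs <;> simp

section OneHeavyWeight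

variable {K : Type*} [Field K] [LinearOrder K] [IsStrictOrderedRing K] {a δ : K}
  {k n : ℕ} (b : Prop) [Decidable b]

theorem nsmul_add_ite_lt_of_lt (hδ : 0 < δ) (hδa : δ < 2 * a) (hkn : k < n) :
    k • a + (if b then δ else 0) < n • a + δ / 2 := by
  have hk : (k : K) + 1 ≤ n := by exact_mod_cast hkn
  have ha : 0 < a := by linarith
  have hite : (if b then δ else 0) ≤ δ := by split_ifs <;> linarith
  rw [nsmul_eq_mul, nsmul_eq_mul]
  linarith [mul_le_mul_of_nonneg_right hk ha.le]

theorem lt_nsmul_add_ite_of_lt (hδ : 0 < δ) (hδa : δ < 2 * a) (hnk : n < k) :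
    n • a + δ / 2 < k • a + (if b then δ else 0) := by
  have hk : (n : K) + 1 ≤ k := by exact_mod_cast hnk
  have ha : 0 < a := by linarith
  have hite : 0 ≤ (if b then δ else 0) := by split_ifs <;> linarith
  rw [nsmul_eq_mul, nsmul_eq_mul]
  linarith [mul_le_mul_of_nonneg_right hk ha.le]

theorem nsmul_add_ite_ne (hδ : 0 < δ) (hδa : δ < 2 * a) :
    k • a + (if b then δ else 0) ≠ n • a + δ / 2 := by
  rcases lt_trichotomy k n with hkn | rfl | hnk
  · exact (nsmul_add_ite_lt_of_lt b hδ hδa hkn).ne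
  · split_ifs <;> linarith
  · exact (lt_nsmul_add_ite_of_lt b hδ hδa hnk).ne'

theorem lt_nsmul_add_ite_iff (hδ : 0 < δ) (hδa : δ < 2 * a) :
    n • a + δ / 2 < k • a + (if b then δ else 0) ↔ n < k ∨ (k = n ∧ b) := by
  rcases lt_trichotomy k n with hkn | rfl | hnk
  · simp only [(nsmul_add_ite_lt_of_lt b hδ hδa hkn).not_gt, hkn.ne, hkn.not_gt, false_or,
      false_and]
  · by_cases hb : b
    · simp [hb, hδ]
    · simpa [hb] using (half_pos hδ).le
  · simp only [lt_nsmul_add_ite_of_lt b hδ hδa hnk, hnk, true_or]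

end OneHeavyWeight

theorem stmt3 (n : ℕ) (hn : 2 ≤ n) (ε : ℚ) (hε0 : 0 < ε)
    (hε : ε < (2 * (n : ℚ) - 1) / ((n : ℚ) * ((n : ℚ) + 1)))
    (θ : Fin (2 * n) → ℚ)
    (hθ : ∀ i : Fin (2 * n),
      θ i = if (i : ℕ) = 0 then 1 / (n : ℚ) + ε else 1 / (n : ℚ) - ε / (2 * (n : ℚ) - 1)) :
    (∀ I : Finset (Fin (2 * n)), I ≠ ∅ → I ≠ Finset.univ → ∑ i ∈ I, θ i ≠ 1) ∧
    (∀ I : Finset (Fin (2 * n)),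
      1 < ∑ i ∈ I, θ i ↔
        (n < I.card ∨ (I.card = n ∧ (⟨0, by omega⟩ : Fin (2 * n)) ∈ I))) := by
  set i₀ : Fin (2 * n) := ⟨0, by omega⟩
  have hn2 : (2 : ℚ) ≤ n := by exact_mod_cast hn
  have hd : (0 : ℚ) < 2 * n - 1 := by linarith
  set η := ε / (2 * n - 1)
  have hη : (2 * n - 1) * η = ε := mul_div_cancel₀ ε hd.ne'
  have hn_inv : n * (1 / n : ℚ) = 1 := mul_one_div_cancel (by positivity)
  set a : ℚ := 1 / n - η
  set δ : ℚ := 2 * n * η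
  have hθ' (i : Fin (2 * n)) : θ i = if i = i₀ then a + δ else a := by
    simp only [hθ, i₀, Fin.ext_iff]
    split_ifs
    · linear_combination -hη
    · rfl
  have hsum (I : Finset (Fin (2 * n))) : ∑ i ∈ I, θ i = #I • a + if i₀ ∈ I then δ else 0 := by
    simp_rw [hθ', sum_ite_eq_card_nsmul_add]
  have hone : n • a + δ / 2 = 1 := by
    rw [nsmul_eq_mul]
    linear_combination hn_inv
  have hδ : 0 < δ := by positivity
  have hδa : δ < 2 * a := by
    rw [lt_div_iff₀ (by positivity), ← div_lt_div_iff_of_pos_right hd, mul_div_right_comm,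
      div_self hd.ne'] at hε
    nlinarith
  refine ⟨fun I _ _ ↦ ?_, fun I ↦ ?_⟩
  · rw [hsum, ← hone]
    exact nsmul_add_ite_ne _ hδ hδa
  · rw [hsum, ← hone]
    exact lt_nsmul_add_ite_iff _ hδ hδa
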